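/- Let π̂ : ℝ × (−2,2) → ℝ³ be the Legendre map π̂(q₂,α) = (q₁°(q₂,α), q₂, q₃°(q₂,α)). Then the Fréchet derivative of π̂ at (q₂,α) is injective if and only if 4q₂ + 3α·(4−α²)^(3/2) ≠ 0. Equivalently, the singular set of the Legendre map is exactly the curve {(q₂,α) : q₂ = −(3α/4)·(4−α²)^(3/2), α ∈ (−2,2)}. -/

import Mathlib

/-- The `q₁` coordinate of the Legendre embedding of the toy model. -/
noncomputable def q₁circ (q₂ α : ℝ) : ℝ :=
  -α ^ 3 / 2 - 2 * q₂ * (Real.sqrt (4 - α ^ 2))⁻¹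

/-- The `q₃` coordinate of the Legendre embedding of the toy model. -/
noncomputable def q₃circ (q₂ α : ℝ) : ℝ :=
  (3 / 2) * α ^ 2 + q₂ * α * (Real.sqrt (4 - α ^ 2))⁻¹

/-- The Legendre map of the toy model, `π̂(q₂,α) = (q₁°(q₂,α), q₂, q₃°(q₂,α))`. -/
noncomputable def pihat (x : ℝ × ℝ) : ℝ × ℝ × ℝ :=
  (q₁circ x.1 x.2, x.1, q₃circ x.1 x.2)

/-! The differential of `π̂` sends `∂_{q₂}` to a vector with middle coordinate `1`, so its kernel
can only be spanned by `∂_α`, and it is injective iff `(∂_α q₁°, ∂_α q₃°) ≠ 0`. Both coordinates of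
`π̂` are affine in `q₂`; writing `s = √(4 - α²)` one finds `∂_α q₃° = (4q₂ + 3αs³)/s³` and
`∂_α q₁° = -(α/2) ∂_α q₃°`, so both vanish exactly when `4q₂ + 3αs³ = 0`. -/

open ContinuousLinearMap

theorem injective_prod_fst_prod_iff {𝕜 : Type*} [Field 𝕜] [TopologicalSpace 𝕜]
    [IsTopologicalRing 𝕜] (a b c d : 𝕜) :
    Function.Injective ((a • fst 𝕜 𝕜 𝕜 + b • snd 𝕜 𝕜 𝕜).prod
      ((fst 𝕜 𝕜 𝕜).prod (c • fst 𝕜 𝕜 𝕜 + d • snd 𝕜 𝕜 𝕜))) ↔ b ≠ 0 ∨ d ≠ 0 := by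
  rw [injective_iff_map_eq_zero]
  constructor
  · intro hinj
    by_contra! hbd
    have := hinj (0, 1) (by simp [hbd.1, hbd.2])
    simp at this
  · rintro hbd ⟨u, v⟩ h
    simp only [ContinuousLinearMap.prod_apply, add_apply, smul_apply, coe_fst', smul_eq_mul,
      coe_snd', Prod.mk_eq_zero] at h
    obtain ⟨hb, rfl, hd⟩ := h
    rcases hbd with hb0 | hd0
    · simpa [hb0] using hb
    · simpa [hd0] using hd

theorem hasFDerivAt_add_fst_mul {𝕜 : Type*} [NontriviallyNormedField 𝕜] {A B : 𝕜 → 𝕜}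
    {A' B' q α : 𝕜} (hA : HasDerivAt A A' α) (hB : HasDerivAt B B' α) :
    HasFDerivAt (fun x : 𝕜 × 𝕜 => A x.2 + x.1 * B x.2)
      (B α • fst 𝕜 𝕜 𝕜 + (A' + q * B') • snd 𝕜 𝕜 𝕜) (q, α) := by
  have hA_snd := hA.comp_hasFDerivAt (q, α) (hasFDerivAt_snd (𝕜 := 𝕜) (E := 𝕜) (F := 𝕜))
  have hB_snd := hB.comp_hasFDerivAt (q, α) (hasFDerivAt_snd (𝕜 := 𝕜) (E := 𝕜) (F := 𝕜))
  refine (hA_snd.add (hasFDerivAt_fst.mul hB_snd)).congr_fderiv ?_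
  ext <;> simp

theorem hasDerivAt_inv_sqrt_sub_sq {c α : ℝ} (h : α ^ 2 < c) :
    HasDerivAt (fun a => (√(c - a ^ 2))⁻¹) (α / √(c - α ^ 2) ^ 3) α := by
  have hpos : 0 < c - α ^ 2 := sub_pos.2 h
  have hs : 0 < √(c - α ^ 2) := Real.sqrt_pos.2 hpos
  refine ((((hasDerivAt_pow 2 α).const_sub c).sqrt hpos.ne').inv hs.ne').congr_deriv ?_
  field_simp
  norm_num

theorem hasFDerivAt_q₁circ (q₂ : ℝ) {α : ℝ} (h : α ^ 2 < 4) :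
    HasFDerivAt (fun x : ℝ × ℝ => q₁circ x.1 x.2)
      ((-2 * (√(4 - α ^ 2))⁻¹) • fst ℝ ℝ ℝ
        + (-(α / 2) * ((4 * q₂ + 3 * α * √(4 - α ^ 2) ^ 3) / √(4 - α ^ 2) ^ 3)) • snd ℝ ℝ ℝ)
      (q₂, α) := by
  have hs : 0 < √(4 - α ^ 2) := Real.sqrt_pos.2 (sub_pos.2 h)
  have hq₁ : (fun x : ℝ × ℝ => q₁circ x.1 x.2)
      = fun x => -x.2 ^ 3 / 2 + x.1 * (-2 * (√(4 - x.2 ^ 2))⁻¹) := by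
    funext x
    simp only [q₁circ]
    ring
  rw [hq₁]
  refine (hasFDerivAt_add_fst_mul (A := fun a => -a ^ 3 / 2)
    (B := fun a => -2 * (√(4 - a ^ 2))⁻¹) (q := q₂) ((hasDerivAt_pow 3 α).neg.div_const 2)
    ((hasDerivAt_inv_sqrt_sub_sq h).const_mul (-2))).congr_fderiv ?_
  congr 2
  field_simp
  norm_num
  ring

theorem hasFDerivAt_q₃circ (q₂ : ℝ) {α : ℝ} (h : α ^ 2 < 4) :
    HasFDerivAt (fun x : ℝ × ℝ => q₃circ x.1 x.2)
      ((α * (√(4 - α ^ 2))⁻¹) • fst ℝ ℝ ℝ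
        + ((4 * q₂ + 3 * α * √(4 - α ^ 2) ^ 3) / √(4 - α ^ 2) ^ 3) • snd ℝ ℝ ℝ)
      (q₂, α) := by
  have hpos : 0 < 4 - α ^ 2 := sub_pos.2 h
  have hs : 0 < √(4 - α ^ 2) := Real.sqrt_pos.2 hpos
  have hq₃ : (fun x : ℝ × ℝ => q₃circ x.1 x.2)
      = fun x => 3 / 2 * x.2 ^ 2 + x.1 * (x.2 * (√(4 - x.2 ^ 2))⁻¹) := by
    funext x
    simp only [q₃circ]
    ring
  rw [hq₃]
  refine (hasFDerivAt_add_fst_mul (A := fun a => 3 / 2 * a ^ 2)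
    (B := fun a => a * (√(4 - a ^ 2))⁻¹) (q := q₂) ((hasDerivAt_pow 2 α).const_mul (3 / 2))
    ((hasDerivAt_id' α).mul (hasDerivAt_inv_sqrt_sub_sq h))).congr_fderiv ?_
  congr 2
  field_simp
  rw [pow_succ, Real.sq_sqrt hpos.le]
  norm_num
  ring

theorem hasFDerivAt_pihat (q₂ : ℝ) {α : ℝ} (h : α ^ 2 < 4) :
    HasFDerivAt pihat
      (((-2 * (√(4 - α ^ 2))⁻¹) • fst ℝ ℝ ℝ
        + (-(α / 2) * ((4 * q₂ + 3 * α * √(4 - α ^ 2) ^ 3) / √(4 - α ^ 2) ^ 3)) • snd ℝ ℝ ℝ).prod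
      ((fst ℝ ℝ ℝ).prod ((α * (√(4 - α ^ 2))⁻¹) • fst ℝ ℝ ℝ
        + ((4 * q₂ + 3 * α * √(4 - α ^ 2) ^ 3) / √(4 - α ^ 2) ^ 3) • snd ℝ ℝ ℝ)))
      (q₂, α) :=
  (hasFDerivAt_q₁circ q₂ h).prodMk (hasFDerivAt_fst.prodMk (hasFDerivAt_q₃circ q₂ h))

/-- The Fréchet derivative of the Legendre map `π̂` at `(q₂,α)` (with `α ∈ (−2,2)`) is
injective iff `4q₂ + 3α(4−α²)^(3/2) ≠ 0`; equivalently, the singular set of the Legendre map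
is exactly the curve `{(q₂,α) : q₂ = −(3α/4)(4−α²)^(3/2)}`. -/
theorem pihat_fderiv_injective_iff (q₂ α : ℝ) (hα : α ∈ Set.Ioo (-2 : ℝ) 2) :
    (Function.Injective (fderiv ℝ pihat (q₂, α))
      ↔ 4 * q₂ + 3 * α * Real.sqrt (4 - α ^ 2) ^ 3 ≠ 0)
    ∧ (¬ Function.Injective (fderiv ℝ pihat (q₂, α))
      ↔ q₂ = -(3 * α / 4) * Real.sqrt (4 - α ^ 2) ^ 3) := by
  have h : α ^ 2 < 4 := by nlinarith [hα.1, hα.2]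
  have hs : √(4 - α ^ 2) ^ 3 ≠ 0 := pow_ne_zero 3 (Real.sqrt_pos.2 (sub_pos.2 h)).ne'
  have hinj : Function.Injective (fderiv ℝ pihat (q₂, α))
      ↔ 4 * q₂ + 3 * α * √(4 - α ^ 2) ^ 3 ≠ 0 := by
    rw [(hasFDerivAt_pihat q₂ h).fderiv, injective_prod_fst_prod_iff,
      or_iff_right_of_imp right_ne_zero_of_mul, div_ne_zero_iff, and_iff_left hs]
  refine ⟨hinj, ?_⟩
  rw [hinj, not_not]
  constructor <;> intro hq <;> linarith
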